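/- Let T be a bounded linear operator on a complex Hilbert space H admitting an A-adjoint, and let q be a nonzero complex number with |q| ≤ 1. Then (|q|/2)·‖T‖_A ≤ w_{q,A}(T) ≤ ‖T‖_A, where ‖T‖_A is the A-operator seminorm and w_{q,A} is the A-q-numerical radius. -/

import Mathlib

open scoped InnerProductSpace

variable {H : Type*} [NormedAddCommGroup H] [InnerProductSpace ℂ H] [CompleteSpace H]

/-- The semi-inner product induced by `A`: `⟨x,y⟩_A = ⟨Ax,y⟩`
(linear in the first argument, as in the paper). -/
noncomputable def sip (A : H →L[ℂ] H) (x y : H) : ℂ := @inner ℂ H _ y (A x)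

/-- The seminorm induced by `A`. -/
noncomputable def normA (A : H →L[ℂ] H) (x : H) : ℝ := Real.sqrt (sip A x x).re

/-- The `A`-`q`-numerical radius of `T`. -/
noncomputable def wqA (A T : H →L[ℂ] H) (q : ℂ) : ℝ :=
  sSup {r : ℝ | ∃ x y : H, normA A x = 1 ∧ normA A y = 1 ∧ sip A x y = q ∧
    r = ‖sip A (T x) y‖}

/-- The `A`-operator seminorm of `T`. -/
noncomputable def opNormA (A T : H →L[ℂ] H) : ℝ :=
  sSup {r : ℝ | ∃ x ∈ closure (Set.range fun v => A v), x ≠ 0 ∧ r = normA A (T x) / normA A x}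

/-!
Write `A = R * R` with `R = A ^ (1/2)`, so that `⟨x, y⟩_A = ⟪R y, R x⟫` and `‖x‖_A = ‖R x‖`.
If `S` is an `A`-adjoint of `T`, then `S T` is symmetric for `⟨·,·⟩_A`, and the power trick shows
that it is `A`-bounded; hence so is `T`, and both suprema are finite. The upper bound is
Cauchy–Schwarz, after replacing `x` by its projection onto the closure of `R(A)`, which has the
same `A`-seminorm. For the lower bound, `dim R(A) ≥ 2` gives, for every `A`-unit vector `x`, two
`A`-unit vectors `y₁, y₂` with `⟨x, yᵢ⟩_A = q` and `R y₁ + R y₂ = 2 q̄ R x`; thus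
`|q| |⟨T x, x⟩_A| ≤ w_{q,A}(T)`, and polarization turns this bound on the quadratic form into
`|q| ‖T‖_A ≤ 2 w_{q,A}(T)`.
-/

lemma le_one_of_forall_pow_two_pow_le {t M : ℝ} (h : ∀ n : ℕ, t ^ 2 ^ n ≤ M) : t ≤ 1 := by
  by_contra! ht
  obtain ⟨n, hn⟩ := pow_unbounded_of_one_lt M ht
  exact (hn.trans_le ((pow_le_pow_right₀ ht.le Nat.lt_two_pow_self.le).trans (h n))).false

section SymmetricPowers

variable {𝕜 E F : Type*} [RCLike 𝕜] [NormedAddCommGroup E] [InnerProductSpace 𝕜 E]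
  [NormedAddCommGroup F] [InnerProductSpace 𝕜 F] {R : E →L[𝕜] F} {B : E →L[𝕜] E}

lemma inner_apply_pow_symm (hB : ∀ x y, ⟪R y, R (B x)⟫_𝕜 = ⟪R (B y), R x⟫_𝕜) (k : ℕ)
    (x y : E) : ⟪R y, R ((B ^ k) x)⟫_𝕜 = ⟪R ((B ^ k) y), R x⟫_𝕜 := by
  induction k generalizing x y with
  | zero => rfl
  | succ k ih =>
    calc ⟪R y, R ((B ^ (k + 1)) x)⟫_𝕜 = ⟪R y, R ((B ^ k) (B x))⟫_𝕜 := by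
          rw [pow_succ, mul_apply_eq_comp]
      _ = ⟪R (B ((B ^ k) y)), R x⟫_𝕜 := by rw [ih, hB]
      _ = ⟪R ((B ^ (k + 1)) y), R x⟫_𝕜 := by rw [pow_succ', mul_apply_eq_comp]

lemma norm_apply_pow_sq_le (hB : ∀ x y, ⟪R y, R (B x)⟫_𝕜 = ⟪R (B y), R x⟫_𝕜) (k : ℕ) (x : E) :
    ‖R ((B ^ k) x)‖ ^ 2 ≤ ‖R x‖ * ‖R ((B ^ (2 * k)) x)‖ := by
  have h : ⟪R ((B ^ k) x), R ((B ^ k) x)⟫_𝕜 = ⟪R ((B ^ (2 * k)) x), R x⟫_𝕜 := by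
    rw [inner_apply_pow_symm hB, two_mul, pow_add, mul_apply_eq_comp]
  rw [← inner_self_eq_norm_sq (𝕜 := 𝕜), h, mul_comm ‖R x‖]
  exact (RCLike.re_le_norm _).trans (norm_inner_le_norm _ _)

lemma norm_apply_pow_two_pow_le (hB : ∀ x y, ⟪R y, R (B x)⟫_𝕜 = ⟪R (B y), R x⟫_𝕜) (n : ℕ)
    (x : E) : ‖R (B x)‖ ^ 2 ^ n ≤ ‖R x‖ ^ (2 ^ n - 1) * ‖R ((B ^ 2 ^ n) x)‖ := by
  induction n with
  | zero => simp
  | succ n ih =>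
    have hexp : (2 ^ n - 1) * 2 + 1 = 2 ^ (n + 1) - 1 := by
      have := Nat.one_le_two_pow (n := n); rw [pow_succ]; omega
    have hsq := norm_apply_pow_sq_le hB (2 ^ n) x
    rw [← pow_succ'] at hsq
    calc ‖R (B x)‖ ^ 2 ^ (n + 1) = (‖R (B x)‖ ^ 2 ^ n) ^ 2 := by rw [← pow_mul, pow_succ]
      _ ≤ (‖R x‖ ^ (2 ^ n - 1) * ‖R ((B ^ 2 ^ n) x)‖) ^ 2 := by gcongr
      _ = ‖R x‖ ^ ((2 ^ n - 1) * 2) * ‖R ((B ^ 2 ^ n) x)‖ ^ 2 := by rw [mul_pow, pow_mul]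
      _ ≤ ‖R x‖ ^ ((2 ^ n - 1) * 2) * (‖R x‖ * ‖R ((B ^ 2 ^ (n + 1)) x)‖) := by gcongr
      _ = ‖R x‖ ^ (2 ^ (n + 1) - 1) * ‖R ((B ^ 2 ^ (n + 1)) x)‖ := by
        rw [← hexp, pow_succ]; ring

/-- `‖R (B x)‖ ^ 2 ^ n ≤ ‖R x‖ ^ (2 ^ n - 1) ‖R‖ ‖B‖ ^ 2 ^ n ‖x‖`, and after taking `2 ^ n`-th
roots the factor `‖R‖ ‖x‖` disappears as `n → ∞`. -/
lemma norm_apply_le_opNorm_mul_of_symm (hB : ∀ x y, ⟪R y, R (B x)⟫_𝕜 = ⟪R (B y), R x⟫_𝕜)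
    (x : E) : ‖R (B x)‖ ≤ ‖B‖ * ‖R x‖ := by
  rcases (norm_nonneg (R x)).eq_or_lt with hx | hx
  · have := norm_apply_pow_sq_le hB 1 x
    rw [← hx, zero_mul, pow_one] at this
    rw [← hx, mul_zero]
    nlinarith [norm_nonneg (R (B x))]
  rcases (norm_nonneg B).eq_or_lt with hB0 | hB0
  · simp [norm_eq_zero.1 hB0.symm]
  rw [← div_le_one (by positivity)]
  refine le_one_of_forall_pow_two_pow_le (M := ‖R‖ * ‖x‖ / ‖R x‖) fun n ↦ ?_
  have hpow : ‖R ((B ^ 2 ^ n) x)‖ ≤ ‖R‖ * (‖B‖ ^ 2 ^ n * ‖x‖) :=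
    (R.le_opNorm _).trans <| by
      gcongr
      exact ((B ^ 2 ^ n).le_opNorm x).trans (by gcongr; exact norm_pow_le' B (by positivity))
  rw [div_pow, div_le_div_iff₀ (by positivity) hx, mul_pow,
    ← pow_sub_one_mul (Nat.two_pow_pos n).ne' ‖R x‖]
  calc ‖R (B x)‖ ^ 2 ^ n * ‖R x‖
      ≤ ‖R x‖ ^ (2 ^ n - 1) * (‖R‖ * (‖B‖ ^ 2 ^ n * ‖x‖)) * ‖R x‖ := by
        gcongr
        exact (norm_apply_pow_two_pow_le hB n x).trans (by gcongr)
    _ = ‖R‖ * ‖x‖ * (‖B‖ ^ 2 ^ n * (‖R x‖ ^ (2 ^ n - 1) * ‖R x‖)) := by ring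

lemma exists_norm_apply_le_of_inner_adjoint {T S : E →L[𝕜] E}
    (hS : ∀ x y, ⟪R y, R (T x)⟫_𝕜 = ⟪R (S y), R x⟫_𝕜) : ∃ C, ∀ x, ‖R (T x)‖ ≤ C * ‖R x‖ := by
  have hB : ∀ x y, ⟪R y, R ((S ∘L T) x)⟫_𝕜 = ⟪R ((S ∘L T) y), R x⟫_𝕜 := by
    intro x y
    simp only [ContinuousLinearMap.comp_apply]
    rw [← inner_conj_symm, ← hS y (T x), inner_conj_symm, hS x (T y)]
  refine ⟨√‖S ∘L T‖, fun x ↦ ?_⟩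
  have hsq : ‖R (T x)‖ ^ 2 ≤ ‖S ∘L T‖ * ‖R x‖ ^ 2 := by
    calc ‖R (T x)‖ ^ 2 = RCLike.re ⟪R ((S ∘L T) x), R x⟫_𝕜 := by
          rw [ContinuousLinearMap.comp_apply, ← hS, inner_self_eq_norm_sq]
      _ ≤ ‖R ((S ∘L T) x)‖ * ‖R x‖ := (RCLike.re_le_norm _).trans (norm_inner_le_norm _ _)
      _ ≤ ‖S ∘L T‖ * ‖R x‖ * ‖R x‖ := by gcongr; exact norm_apply_le_opNorm_mul_of_symm hB x
      _ = ‖S ∘L T‖ * ‖R x‖ ^ 2 := by ring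
  rw [← Real.sqrt_sq (norm_nonneg (R x)), ← Real.sqrt_mul (norm_nonneg _)]
  exact Real.le_sqrt_of_sq_le hsq

end SymmetricPowers

section Geometry

variable {𝕜 F : Type*} [RCLike 𝕜] [NormedAddCommGroup F] [InnerProductSpace 𝕜 F]

/-- If every unit vector of `K` had a nonzero inner product with `v`, then `w ↦ ⟪v, w⟫` would
embed `K` into `𝕜`. -/
lemma Submodule.exists_norm_eq_one_inner_eq_zero {K : Submodule 𝕜 F}
    (hK : 2 ≤ Module.rank 𝕜 K) (v : F) : ∃ z ∈ K, ‖z‖ = 1 ∧ ⟪z, v⟫_𝕜 = 0 := by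
  by_contra! h
  have hinj : Function.Injective ((innerₛₗ 𝕜 v).comp K.subtype) := by
    rw [← LinearMap.ker_eq_bot, LinearMap.ker_eq_bot']
    intro w hw
    by_contra hw0
    have hw0' : (w : F) ≠ 0 := by simpa using hw0
    refine h _ (K.smul_mem (‖(w : F)‖⁻¹ : 𝕜) w.2) (norm_smul_inv_norm hw0') ?_
    have hw' : ⟪v, (w : F)⟫_𝕜 = 0 := hw
    rw [inner_smul_left, inner_eq_zero_symm.1 hw', mul_zero]
  have := (Cardinal.lift_le.2 hK).trans (LinearMap.lift_rank_le_of_injective _ hinj)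
  simp at this

lemma Submodule.exists_pair_norm_eq_one_inner_eq {K : Submodule 𝕜 F}
    (hK : 2 ≤ Module.rank 𝕜 K) {v : F} (hvK : v ∈ K) (hv : ‖v‖ = 1) {q : 𝕜} (hq : ‖q‖ ≤ 1) :
    ∃ y₁ ∈ K, ∃ y₂ ∈ K, ‖y₁‖ = 1 ∧ ‖y₂‖ = 1 ∧ ⟪y₁, v⟫_𝕜 = q ∧ ⟪y₂, v⟫_𝕜 = q ∧
      y₁ + y₂ = (2 * starRingEnd 𝕜 q) • v := by
  obtain ⟨z, hzK, hz, hzv⟩ := K.exists_norm_eq_one_inner_eq_zero hK v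
  set s := √(1 - ‖q‖ ^ 2)
  have hs : s ^ 2 = 1 - ‖q‖ ^ 2 := Real.sq_sqrt (by nlinarith [norm_nonneg q])
  have key : ∀ ε : ℝ, ε ^ 2 = 1 →
      starRingEnd 𝕜 q • v + ((ε * s : ℝ) : 𝕜) • z ∈ K ∧
      ‖starRingEnd 𝕜 q • v + ((ε * s : ℝ) : 𝕜) • z‖ = 1 ∧
      ⟪starRingEnd 𝕜 q • v + ((ε * s : ℝ) : 𝕜) • z, v⟫_𝕜 = q := by
    intro ε hε
    refine ⟨K.add_mem (K.smul_mem _ hvK) (K.smul_mem _ hzK), ?_, ?_⟩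
    · have horth : ⟪starRingEnd 𝕜 q • v, ((ε * s : ℝ) : 𝕜) • z⟫_𝕜 = 0 := by
        rw [inner_smul_left, inner_smul_right, inner_eq_zero_symm.1 hzv, mul_zero, mul_zero]
      have := norm_add_sq_eq_norm_sq_add_norm_sq_of_inner_eq_zero _ _ horth
      rw [norm_smul, norm_smul, RCLike.norm_conj, hv, hz, RCLike.norm_ofReal] at this
      rw [← pow_eq_one_iff_of_nonneg (norm_nonneg _) two_ne_zero]
      nlinarith [sq_abs (ε * s)]
    · rw [inner_add_left, inner_smul_left, inner_smul_left, hzv, RCLike.conj_conj,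
        inner_self_eq_norm_sq_to_K, hv]
      simp
  obtain ⟨hK₁, hn₁, hi₁⟩ := key 1 (one_pow 2)
  obtain ⟨hK₂, hn₂, hi₂⟩ := key (-1) (by norm_num)
  refine ⟨_, hK₁, _, hK₂, hn₁, hn₂, hi₁, hi₂, ?_⟩
  simp only [neg_mul, one_mul, RCLike.ofReal_neg, neg_smul]
  module

end Geometry

section Polarization

variable {E F : Type*} [AddCommGroup E] [Module ℂ E] [NormedAddCommGroup F]
  [InnerProductSpace ℂ F]

lemma norm_inner_self_le_of_norm_eq_one {R M : E →ₗ[ℂ] F} {c : ℝ}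
    (h : ∀ x, ‖R x‖ = 1 → ‖⟪R x, M x⟫_ℂ‖ ≤ c) (u : E) : ‖⟪R u, M u⟫_ℂ‖ ≤ c * ‖R u‖ ^ 2 := by
  rcases eq_or_ne (R u) 0 with hu | hu
  · simp [hu]
  have hupos : 0 < ‖R u‖ := norm_pos_iff.2 hu
  have hx : ‖R ((‖R u‖ : ℂ)⁻¹ • u)‖ = 1 := by rw [map_smul]; exact norm_smul_inv_norm hu
  have := h _ hx
  rw [map_smul, map_smul, inner_smul_left, inner_smul_right, norm_mul, norm_mul,
    RCLike.norm_conj, norm_inv, Complex.norm_real, Real.norm_of_nonneg hupos.le] at this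
  calc ‖⟪R u, M u⟫_ℂ‖ = ‖R u‖⁻¹ * (‖R u‖⁻¹ * ‖⟪R u, M u⟫_ℂ‖) * ‖R u‖ ^ 2 := by
        field_simp
    _ ≤ c * ‖R u‖ ^ 2 := by gcongr

lemma inner_map_map_polarization (R M : E →ₗ[ℂ] F) (x y : E) :
    4 * ⟪R y, M x⟫_ℂ = ⟪R (x + y), M (x + y)⟫_ℂ - ⟪R (x - y), M (x - y)⟫_ℂ
      + Complex.I * ⟪R (x + Complex.I • y), M (x + Complex.I • y)⟫_ℂ
      - Complex.I * ⟪R (x - Complex.I • y), M (x - Complex.I • y)⟫_ℂ := by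
  simp only [map_add, map_sub, map_smul, inner_add_left, inner_add_right, inner_sub_left,
    inner_sub_right, inner_smul_left, inner_smul_right, Complex.conj_I]
  ring_nf
  simp only [Complex.I_sq]
  ring

lemma norm_inner_le_of_forall_norm_inner_self_le {R M : E →ₗ[ℂ] F} {c : ℝ}
    (h : ∀ u, ‖⟪R u, M u⟫_ℂ‖ ≤ c * ‖R u‖ ^ 2) (x y : E) :
    ‖⟪R y, M x⟫_ℂ‖ ≤ c * (‖R x‖ ^ 2 + ‖R y‖ ^ 2) := by
  have hpar₁ := parallelogram_law_with_norm ℂ (R x) (R y)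
  have hpar₂ := parallelogram_law_with_norm ℂ (R x) (Complex.I • R y)
  rw [norm_smul, Complex.norm_I, one_mul] at hpar₂
  have htri : 4 * ‖⟪R y, M x⟫_ℂ‖ ≤ ‖⟪R (x + y), M (x + y)⟫_ℂ‖ + ‖⟪R (x - y), M (x - y)⟫_ℂ‖
      + ‖⟪R (x + Complex.I • y), M (x + Complex.I • y)⟫_ℂ‖
      + ‖⟪R (x - Complex.I • y), M (x - Complex.I • y)⟫_ℂ‖ := by
    have := congrArg norm (inner_map_map_polarization R M x y)
    rw [norm_mul, RCLike.norm_ofNat] at this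
    rw [this]
    refine (norm_sub_le _ _).trans (add_le_add ((norm_add_le _ _).trans
      (add_le_add (norm_sub_le _ _) le_rfl)) le_rfl) |>.trans_eq ?_
    simp only [norm_mul, Complex.norm_I, one_mul]
  have h₁ := h (x + y)
  have h₂ := h (x - y)
  have h₃ := h (x + Complex.I • y)
  have h₄ := h (x - Complex.I • y)
  simp only [map_add, map_sub, map_smul] at h₁ h₂ h₃ h₄ htri
  linarith [congrArg (c * ·) hpar₁, congrArg (c * ·) hpar₂]

lemma norm_apply_le_of_forall_norm_inner_self_le {R : E →ₗ[ℂ] F} {T : E →ₗ[ℂ] E} {c : ℝ}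
    (h : ∀ u, ‖⟪R u, R (T u)⟫_ℂ‖ ≤ c * ‖R u‖ ^ 2) {x : E} (hx : R x ≠ 0) :
    ‖R (T x)‖ ≤ 2 * c * ‖R x‖ := by
  have hxpos : 0 < ‖R x‖ := norm_pos_iff.2 hx
  have hc : 0 ≤ c := nonneg_of_mul_nonneg_left ((norm_nonneg _).trans (h x)) (by positivity)
  rcases eq_or_ne (R (T x)) 0 with hTx | hTx
  · rw [hTx, norm_zero]; positivity
  have hTxpos : 0 < ‖R (T x)‖ := norm_pos_iff.2 hTx
  -- test against the vector `y = s • T x` with `‖R y‖ = ‖R x‖`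
  set s := ‖R x‖ / ‖R (T x)‖
  have hs : s * ‖R (T x)‖ = ‖R x‖ := div_mul_cancel₀ _ hTxpos.ne'
  have hy : ‖R ((s : ℂ) • T x)‖ = ‖R x‖ := by
    rw [map_smul, norm_smul, Complex.norm_real, Real.norm_of_nonneg (by positivity), hs]
  have hinner : ‖⟪R ((s : ℂ) • T x), R (T x)⟫_ℂ‖ = ‖R x‖ * ‖R (T x)‖ := by
    rw [map_smul, inner_smul_left, norm_mul, RCLike.norm_conj, Complex.norm_real,
      Real.norm_of_nonneg (by positivity), inner_self_eq_norm_sq_to_K, norm_pow,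
      RCLike.norm_ofReal, abs_norm, sq, ← mul_assoc, hs]
  have := norm_inner_le_of_forall_norm_inner_self_le (M := R ∘ₗ T) h x ((s : ℂ) • T x)
  rw [LinearMap.comp_apply, hinner, hy] at this
  nlinarith

end Polarization

section Factorization

variable {E F : Type*} [NormedAddCommGroup E] [InnerProductSpace ℂ E] [NormedAddCommGroup F]
  [InnerProductSpace ℂ F] {A T : E →L[ℂ] E} {R : E →L[ℂ] F}

lemma sip_eq_inner_sqrt [CompleteSpace E] (hA : A.IsPositive) (x y : E) :
    sip A x y = ⟪CFC.sqrt A y, CFC.sqrt A x⟫_ℂ := by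
  have hsymm := ContinuousLinearMap.isSelfAdjoint_iff_isSymmetric.1
    (IsSelfAdjoint.of_nonneg (CFC.sqrt_nonneg A))
  calc sip A x y = ⟪y, CFC.sqrt A (CFC.sqrt A x)⟫_ℂ := by
        rw [sip, ← mul_apply_eq_comp,
          CFC.sqrt_mul_sqrt_self A ((ContinuousLinearMap.nonneg_iff_isPositive A).2 hA)]
    _ = ⟪CFC.sqrt A y, CFC.sqrt A x⟫_ℂ := (hsymm y _).symm

lemma normA_eq_norm (hR : ∀ x y, sip A x y = ⟪R y, R x⟫_ℂ) (x : E) : normA A x = ‖R x‖ := by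
  rw [normA, hR, ← RCLike.re_to_complex, inner_self_eq_norm_sq, Real.sqrt_sq (norm_nonneg _)]

lemma eq_zero_of_mem_closure_range (hR : ∀ x y, sip A x y = ⟪R y, R x⟫_ℂ) {x : E}
    (hx : x ∈ closure (Set.range fun v => A v)) (hRx : R x = 0) : x = 0 := by
  have hsub : closure (Set.range fun v => A v) ⊆ {y : E | ⟪y, x⟫_ℂ = 0} := by
    refine closure_minimal ?_ (isClosed_eq (continuous_id.inner continuous_const) continuous_const)
    rintro _ ⟨v, rfl⟩
    rw [Set.mem_ofPred_eq, ← inner_conj_symm, ← sip, hR, hRx, inner_zero_left, map_zero]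
  exact inner_self_eq_zero.1 (hsub hx)

lemma exists_mem_closure_range_apply_eq [CompleteSpace E]
    (hR : ∀ x y, sip A x y = ⟪R y, R x⟫_ℂ) (x : E) :
    ∃ x₁ ∈ closure (Set.range fun v => A v), R x₁ = R x := by
  set K := (LinearMap.range (A : E →ₗ[ℂ] E)).topologicalClosure
  have : CompleteSpace K := (Submodule.isClosed_topologicalClosure _).completeSpace_coe
  obtain ⟨x₁, hx₁, x₂, hx₂, rfl⟩ := K.exists_add_mem_mem_orthogonal x
  rw [Submodule.orthogonal_closure] at hx₂
  have hRx₂ : R x₂ = 0 := by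
    rw [← inner_self_eq_zero (𝕜 := ℂ), ← hR, sip]
    exact (Submodule.mem_orthogonal' _ _).1 hx₂ _ ⟨x₂, rfl⟩
  exact ⟨x₁, hx₁, by rw [map_add, hRx₂, add_zero]⟩

lemma two_le_rank_range [CompleteSpace E] [CompleteSpace F]
    (hR : ∀ x y, sip A x y = ⟪R y, R x⟫_ℂ)
    (hrank : 2 ≤ Module.rank ℂ (LinearMap.range (A : E →ₗ[ℂ] E))) :
    2 ≤ Module.rank ℂ (LinearMap.range (R : E →ₗ[ℂ] F)) := by
  have hA : A = (ContinuousLinearMap.adjoint R).comp R := by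
    ext x
    refine ext_inner_left ℂ fun y ↦ ?_
    rw [ContinuousLinearMap.comp_apply, ContinuousLinearMap.adjoint_inner_right, ← hR, sip]
  rw [hA, ContinuousLinearMap.toLinearMap_comp] at hrank
  have := (Cardinal.lift_le.2 hrank).trans (LinearMap.lift_rank_comp_le_right (R : E →ₗ[ℂ] F) _)
  simpa using this

variable {C : ℝ} {q : ℂ}

lemma wqA_nonneg : 0 ≤ wqA A T q :=
  Real.sSup_nonneg (by rintro _ ⟨x, y, -, -, -, rfl⟩; exact norm_nonneg _)

lemma opNormA_nonneg : 0 ≤ opNormA A T :=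
  Real.sSup_nonneg (by
    rintro _ ⟨x, -, -, rfl⟩
    exact div_nonneg (Real.sqrt_nonneg _) (Real.sqrt_nonneg _))

lemma opNormA_le (hR : ∀ x y, sip A x y = ⟪R y, R x⟫_ℂ) {c : ℝ} (hc : 0 ≤ c)
    (h : ∀ x, R x ≠ 0 → ‖R (T x)‖ ≤ c * ‖R x‖) : opNormA A T ≤ c := by
  refine Real.sSup_le ?_ hc
  rintro _ ⟨x, hx, hx0, rfl⟩
  have hRx : R x ≠ 0 := fun h0 ↦ hx0 (eq_zero_of_mem_closure_range hR hx h0)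
  rw [normA_eq_norm hR, normA_eq_norm hR, div_le_iff₀ (norm_pos_iff.2 hRx)]
  exact h x hRx

lemma le_opNormA (hR : ∀ x y, sip A x y = ⟪R y, R x⟫_ℂ) (hC : ∀ x, ‖R (T x)‖ ≤ C * ‖R x‖)
    {x : E} (hx : x ∈ closure (Set.range fun v => A v)) (hRx : R x ≠ 0) :
    ‖R (T x)‖ ≤ opNormA A T * ‖R x‖ := by
  have hbdd : BddAbove {r : ℝ | ∃ x ∈ closure (Set.range fun v => A v), x ≠ 0 ∧
      r = normA A (T x) / normA A x} := by
    refine ⟨C, ?_⟩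
    rintro _ ⟨y, hy, hy0, rfl⟩
    have hRy : R y ≠ 0 := fun h0 ↦ hy0 (eq_zero_of_mem_closure_range hR hy h0)
    rw [normA_eq_norm hR, normA_eq_norm hR, div_le_iff₀ (norm_pos_iff.2 hRy)]
    exact hC y
  rw [← div_le_iff₀ (norm_pos_iff.2 hRx), ← normA_eq_norm hR, ← normA_eq_norm hR]
  exact le_csSup hbdd ⟨x, hx, fun h0 ↦ hRx (by rw [h0, map_zero]), rfl⟩

lemma norm_apply_le_opNormA_mul [CompleteSpace E] (hR : ∀ x y, sip A x y = ⟪R y, R x⟫_ℂ)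
    (hC : ∀ x, ‖R (T x)‖ ≤ C * ‖R x‖) (x : E) : ‖R (T x)‖ ≤ opNormA A T * ‖R x‖ := by
  have hT0 : ∀ z, R z = 0 → R (T z) = 0 := fun z hz ↦
    norm_le_zero_iff.1 ((hC z).trans_eq (by rw [hz, norm_zero, mul_zero]))
  rcases eq_or_ne (R x) 0 with hRx | hRx
  · rw [hT0 x hRx, hRx, norm_zero, mul_zero]
  obtain ⟨x₁, hx₁, hRx₁⟩ := exists_mem_closure_range_apply_eq hR x
  have hTx₁ : R (T x₁) = R (T x) := by
    have := hT0 (x₁ - x) (by rw [map_sub, hRx₁, sub_self])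
    rwa [map_sub, map_sub, sub_eq_zero] at this
  rw [← hTx₁, ← hRx₁]
  exact le_opNormA hR hC hx₁ (hRx₁ ▸ hRx)

lemma norm_inner_le_wqA (hR : ∀ x y, sip A x y = ⟪R y, R x⟫_ℂ)
    (hC : ∀ x, ‖R (T x)‖ ≤ C * ‖R x‖) {x y : E} (hx : ‖R x‖ = 1) (hy : ‖R y‖ = 1)
    (hxy : ⟪R y, R x⟫_ℂ = q) : ‖⟪R y, R (T x)⟫_ℂ‖ ≤ wqA A T q := by
  refine le_csSup ⟨C, ?_⟩ ⟨x, y, by rwa [normA_eq_norm hR], by rwa [normA_eq_norm hR],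
    by rwa [hR], by rw [hR]⟩
  rintro _ ⟨x', y', hx', hy', -, rfl⟩
  rw [normA_eq_norm hR] at hx' hy'
  rw [hR]
  refine (norm_inner_le_norm _ _).trans ?_
  simpa [hx', hy'] using hC x'

lemma wqA_le_opNormA [CompleteSpace E] (hR : ∀ x y, sip A x y = ⟪R y, R x⟫_ℂ)
    (hC : ∀ x, ‖R (T x)‖ ≤ C * ‖R x‖) : wqA A T q ≤ opNormA A T := by
  refine Real.sSup_le ?_ opNormA_nonneg
  rintro _ ⟨x, y, hx, hy, -, rfl⟩
  rw [normA_eq_norm hR] at hx hy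
  rw [hR]
  refine (norm_inner_le_norm _ _).trans ?_
  simpa [hx, hy] using norm_apply_le_opNormA_mul hR hC x

lemma norm_mul_inner_le_wqA (hR : ∀ x y, sip A x y = ⟪R y, R x⟫_ℂ)
    (hC : ∀ x, ‖R (T x)‖ ≤ C * ‖R x‖) (hrank : 2 ≤ Module.rank ℂ (LinearMap.range (R : E →ₗ[ℂ] F)))
    (hq : ‖q‖ ≤ 1) {x : E} (hx : ‖R x‖ = 1) : ‖q‖ * ‖⟪R x, R (T x)⟫_ℂ‖ ≤ wqA A T q := by
  obtain ⟨_, hy₁, _, hy₂, h₁, h₂, hq₁, hq₂, hsum⟩ :=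
    (LinearMap.range (R : E →ₗ[ℂ] F)).exists_pair_norm_eq_one_inner_eq hrank ⟨x, rfl⟩ hx hq
  obtain ⟨x₁, rfl⟩ := LinearMap.mem_range.1 hy₁
  obtain ⟨x₂, rfl⟩ := LinearMap.mem_range.1 hy₂
  simp only [ContinuousLinearMap.coe_coe] at h₁ h₂ hq₁ hq₂ hsum
  have key : (2 : ℂ) * (q * ⟪R x, R (T x)⟫_ℂ) = ⟪R x₁, R (T x)⟫_ℂ + ⟪R x₂, R (T x)⟫_ℂ := by
    rw [← inner_add_left, hsum, inner_smul_left, map_mul, RCLike.conj_conj, map_ofNat, mul_assoc]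
  calc ‖q‖ * ‖⟪R x, R (T x)⟫_ℂ‖ = ‖(2 : ℂ) * (q * ⟪R x, R (T x)⟫_ℂ)‖ / 2 := by
        rw [norm_mul, norm_mul]; norm_num
    _ ≤ (‖⟪R x₁, R (T x)⟫_ℂ‖ + ‖⟪R x₂, R (T x)⟫_ℂ‖) / 2 := by
        rw [key]; gcongr; exact norm_add_le _ _
    _ ≤ (wqA A T q + wqA A T q) / 2 := by
        gcongr
        · exact norm_inner_le_wqA hR hC hx h₁ hq₁
        · exact norm_inner_le_wqA hR hC hx h₂ hq₂
    _ = wqA A T q := by ring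

end Factorization

theorem stmt1 (A T : H →L[ℂ] H) (hA : A.IsPositive)
    (hrank : 2 ≤ Module.rank ℂ (LinearMap.range (A : H →ₗ[ℂ] H)))
    (hadj : ∃ S : H →L[ℂ] H, ∀ x y : H, sip A (T x) y = sip A x (S y))
    (q : ℂ) (hq0 : q ≠ 0) (hq : ‖q‖ ≤ 1) :
    ‖q‖ / 2 * opNormA A T ≤ wqA A T q ∧ wqA A T q ≤ opNormA A T := by
  obtain ⟨S, hS⟩ := hadj
  set R := CFC.sqrt A
  have hR : ∀ x y, sip A x y = ⟪R y, R x⟫_ℂ := sip_eq_inner_sqrt hA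
  obtain ⟨C, hC⟩ := exists_norm_apply_le_of_inner_adjoint (R := R) (T := T) (S := S)
    fun x y ↦ by rw [← hR, ← hR, hS]
  refine ⟨?_, wqA_le_opNormA hR hC⟩
  have hqpos : 0 < ‖q‖ := norm_pos_iff.2 hq0
  have hself : ∀ u, ‖⟪R u, R (T u)⟫_ℂ‖ ≤ wqA A T q / ‖q‖ * ‖R u‖ ^ 2 :=
    norm_inner_self_le_of_norm_eq_one (R := (R : H →ₗ[ℂ] H)) (M := (R : H →ₗ[ℂ] H) ∘ₗ T)
      fun x hx ↦ (le_div_iff₀' hqpos).2 <|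
        norm_mul_inner_le_wqA hR hC (two_le_rank_range hR hrank) hq hx
  have hop : opNormA A T ≤ 2 * (wqA A T q / ‖q‖) :=
    opNormA_le hR (mul_nonneg zero_le_two (div_nonneg wqA_nonneg hqpos.le))
      fun x hx ↦ norm_apply_le_of_forall_norm_inner_self_le (R := (R : H →ₗ[ℂ] H))
        (T := (T : H →ₗ[ℂ] H)) hself hx
  calc ‖q‖ / 2 * opNormA A T ≤ ‖q‖ / 2 * (2 * (wqA A T q / ‖q‖)) := by gcongr
    _ = wqA A T q := by field_simp
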